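/- Let ρ_AB be a pure bipartite density operator on a finite-dimensional Hilbert space A⊗B. Then the mutual information variance equals four times the varentropy of the reduced state: V(ρ_AB ‖ ρ_A ⊗ ρ_B) = 4·V(A)_ρ, where V(A)_ρ = Tr(ρ_A (log ρ_A)²) − (S(A)_ρ)² and S(A)_ρ = −Tr(ρ_A log ρ_A). -/

import Mathlib

open Matrix Filter
open scoped ComplexOrder Classical Kronecker

variable {n : Type*} [Fintype n] [DecidableEq n]

/-- Square root of a positive semidefinite matrix (0 if not PSD). -/
noncomputable def msqrt (A : Matrix n n ℂ) : Matrix n n ℂ :=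
  if h : A.PosSemidef then (h.1.eigenvectorUnitary : Matrix n n ℂ) *
    diagonal (((↑) : ℝ → ℂ) ∘ Real.sqrt ∘ h.1.eigenvalues) *
    (star h.1.eigenvectorUnitary : Matrix n n ℂ) else 0

/-- Trace norm ‖A‖₁ = Tr √(AᴴA). -/
noncomputable def traceNorm (A : Matrix n n ℂ) : ℝ :=
  ((msqrt (Aᴴ * A)).trace).re

/-- Fidelity F(ρ,σ) = ‖√ρ √σ‖₁. -/
noncomputable def fidelity (ρ σ : Matrix n n ℂ) : ℝ :=
  traceNorm (msqrt ρ * msqrt σ)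

/-- Purified distance for normalized states. -/
noncomputable def purifiedDist (ρ σ : Matrix n n ℂ) : ℝ :=
  Real.sqrt (1 - (fidelity ρ σ) ^ 2)

/-- Density operator predicate. -/
def IsDensity (ρ : Matrix n n ℂ) : Prop := ρ.PosSemidef ∧ ρ.trace = 1

/-- Subnormalized state predicate. -/
def IsSubnormalized (ρ : Matrix n n ℂ) : Prop := ρ.PosSemidef ∧ ρ.trace.re ≤ 1

/-- Generalized fidelity for subnormalized states. -/
noncomputable def genFidelity (ρ σ : Matrix n n ℂ) : ℝ :=
  traceNorm (msqrt ρ * msqrt σ) + Real.sqrt ((1 - ρ.trace.re) * (1 - σ.trace.re))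

/-- Purified distance via the generalized fidelity. -/
noncomputable def purifiedDistG (ρ σ : Matrix n n ℂ) : ℝ :=
  Real.sqrt (1 - (genFidelity ρ σ) ^ 2)

/-- Max-relative entropy (base 2). -/
noncomputable def Dmax (ρ σ : Matrix n n ℂ) : ℝ :=
  sInf {l : ℝ | ((2:ℝ) ^ l • σ - ρ).PosSemidef}

/-- Min-relative entropy (base 2). -/
noncomputable def Dmin (ρ σ : Matrix n n ℂ) : ℝ :=
  -Real.logb 2 ((fidelity ρ σ) ^ 2)

/-- ε-ball of subnormalized states around ρ in purified distance. -/
def epsBall (ε : ℝ) (ρ : Matrix n n ℂ) : Set (Matrix n n ℂ) :=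
  {ρ' | IsSubnormalized ρ' ∧ purifiedDistG ρ ρ' ≤ ε}

/-- Matrix logarithm via the hermitian functional calculus (0 if not Hermitian). -/
noncomputable def mlog (A : Matrix n n ℂ) : Matrix n n ℂ :=
  if h : A.IsHermitian then h.cfc Real.log else 0

/-- Quantum relative entropy D(ρ‖σ) = Tr ρ(log ρ − log σ). -/
noncomputable def relEnt (ρ σ : Matrix n n ℂ) : ℝ :=
  ((ρ * (mlog ρ - mlog σ)).trace).re

/-- Relative entropy variance V(ρ‖σ). -/
noncomputable def relVar (ρ σ : Matrix n n ℂ) : ℝ :=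
  ((ρ * (mlog ρ - mlog σ) ^ 2).trace).re - (relEnt ρ σ) ^ 2

/-- Varentropy V(A)_ρ = Tr(ρ (log ρ)²) − (Tr ρ log ρ)². -/
noncomputable def varentropy (ρ : Matrix n n ℂ) : ℝ :=
  ((ρ * (mlog ρ) ^ 2).trace).re - (((ρ * mlog ρ).trace).re) ^ 2

/-- Partial trace over the second (B) register. -/
noncomputable def ptraceB {A B : Type*} [Fintype A] [Fintype B]
    (M : Matrix (A × B) (A × B) ℂ) : Matrix A A ℂ :=
  Matrix.of fun a a' => ∑ b, M (a, b) (a', b)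

/-- Partial trace over the first (A) register. -/
noncomputable def ptraceA {A B : Type*} [Fintype A] [Fintype B]
    (M : Matrix (A × B) (A × B) ℂ) : Matrix B B ℂ :=
  Matrix.of fun b b' => ∑ a, M (a, b) (a, b')


/-!
Write the pure state as `ψ = vec N`, so that `ρ_A = (Nᴴ N)ᵀ` and `ρ_B = N Nᴴ`. As `ρ` is a
rank-one projection, `log ρ = 0`, so `V(ρ ‖ ρ_A ⊗ ρ_B)` is the variance of
`L = log (ρ_A ⊗ ρ_B)` in `ρ`. Diagonalising both factors gives
`L = log ρ_A ⊗ P_B + P_A ⊗ log ρ_B`, with `P` the support projections. Since `P_B N = N` and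
`log (N Nᴴ) N = N log (Nᴴ N)`, the operator `L` acts on `ψ` as `2 log ρ_A ⊗ 1`, with which it
commutes; so the variance of `L` is four times that of `log ρ_A ⊗ 1`, which is `V(A)`.

Identities between functions of Hermitian matrices are proved by replacing the functions with a
Lagrange interpolation polynomial on the (finite) spectra involved.
-/

open Polynomial

noncomputable def supportIndicator (x : ℝ) : ℝ := if x = 0 then 0 else 1

theorem supportIndicator_mul_self (x : ℝ) : supportIndicator x * x = x := by
  unfold supportIndicator; split_ifs with hx <;> simp [hx]

theorem log_mul_supportIndicator (x : ℝ) : Real.log x * supportIndicator x = Real.log x := by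
  unfold supportIndicator; split_ifs with hx <;> simp [hx]

-- Holds for all reals, zero included, because `Real.log 0 = 0`.
theorem log_mul_eq_log_mul_supportIndicator_add (x y : ℝ) :
    Real.log (x * y) = Real.log x * supportIndicator y + supportIndicator x * Real.log y := by
  unfold supportIndicator
  split_ifs with hy hx hx <;> simp [*, Real.log_mul]

theorem cfc_log_eq_zero_of_isIdempotentElem {A : Type*} [Ring A] [StarRing A] [Algebra ℝ A]
    [TopologicalSpace A] [ContinuousFunctionalCalculus ℝ A IsSelfAdjoint] {a : A}
    (ha : IsIdempotentElem a) : cfc Real.log a = 0 := by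
  rw [← cfc_zero ℝ a]
  refine cfc_congr fun x hx => ?_
  rcases ha.spectrum_subset ℝ hx with rfl | rfl <;> simp

namespace Matrix

section FunctionalCalculus

variable {𝕜 ι κ : Type*} [RCLike 𝕜] [Fintype ι] [DecidableEq ι] [Fintype κ] [DecidableEq κ]

theorem pow_mul_eq_mul_pow_of_mul_eq_mul {R : Type*} [Semiring R] {X : Matrix ι ι R}
    {Y : Matrix κ κ R} {M : Matrix ι κ R} (h : X * M = M * Y) (k : ℕ) :
    X ^ k * M = M * Y ^ k := by
  induction k with
  | zero => simp
  | succ k ih => rw [pow_succ, Matrix.mul_assoc, h, ← Matrix.mul_assoc, ih, Matrix.mul_assoc,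
      ← pow_succ]

theorem aeval_mul_eq_mul_aeval_of_mul_eq_mul {R S : Type*} [CommSemiring R] [CommSemiring S]
    [Algebra R S] {X : Matrix ι ι S} {Y : Matrix κ κ S} {M : Matrix ι κ S} (h : X * M = M * Y)
    (q : R[X]) : aeval X q * M = M * aeval Y q := by
  simp only [aeval_eq_sum_range, Matrix.sum_mul, Matrix.mul_sum, Matrix.smul_mul,
    pow_mul_eq_mul_pow_of_mul_eq_mul h, Matrix.mul_smul]

theorem continuousOn_spectrum (X : Matrix ι ι 𝕜) (f : ℝ → ℝ) :
    ContinuousOn f (spectrum ℝ X) :=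
  finite_real_spectrum.continuousOn f

theorem cfc_eq_aeval_of_eqOn {X : Matrix ι ι 𝕜} (hX : X.IsHermitian) {f : ℝ → ℝ} {q : ℝ[X]}
    (h : Set.EqOn f (fun x => q.eval x) (spectrum ℝ X)) : cfc f X = aeval X q :=
  (cfc_congr h).trans (cfc_polynomial q X)

theorem exists_cfc_eq_aeval_and_eqOn {X : Matrix ι ι 𝕜} (hX : X.IsHermitian) (f : ℝ → ℝ)
    {s : Set ℝ} (hs : s.Finite) :
    ∃ q : ℝ[X], cfc f X = aeval X q ∧ Set.EqOn f (fun x => q.eval x) s := by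
  have hfin : (spectrum ℝ X ∪ s).Finite := finite_real_spectrum.union hs
  have hq : Set.EqOn f (fun x => (Lagrange.interpolate hfin.toFinset id f).eval x)
      (spectrum ℝ X ∪ s) := fun x hx =>
    (Lagrange.eval_interpolate_at_node f (Set.injOn_id _) (hfin.mem_toFinset.2 hx)).symm
  exact ⟨_, cfc_eq_aeval_of_eqOn hX (hq.mono Set.subset_union_left),
    hq.mono Set.subset_union_right⟩

theorem cfc_mul_eq_mul_cfc_of_mul_eq_mul {X : Matrix ι ι 𝕜} {Y : Matrix κ κ 𝕜}
    {M : Matrix ι κ 𝕜} (hX : X.IsHermitian) (hY : Y.IsHermitian) (h : X * M = M * Y)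
    (f : ℝ → ℝ) : cfc f X * M = M * cfc f Y := by
  obtain ⟨q, hqX, hqY⟩ := exists_cfc_eq_aeval_and_eqOn hX f (finite_real_spectrum (A := Y))
  rw [hqX, cfc_eq_aeval_of_eqOn hY hqY, aeval_mul_eq_mul_aeval_of_mul_eq_mul h]

theorem cfc_transpose {X : Matrix ι ι 𝕜} (hX : X.IsHermitian) (f : ℝ → ℝ) :
    cfc f Xᵀ = (cfc f X)ᵀ := by
  obtain ⟨q, hqX, hqXt⟩ := exists_cfc_eq_aeval_and_eqOn hX f (finite_real_spectrum (A := Xᵀ))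
  rw [hqX, cfc_eq_aeval_of_eqOn hX.transpose hqXt]
  simp only [aeval_eq_sum_range, transpose_sum, transpose_smul, transpose_pow]

theorem cfc_diagonal (d : ι → ℝ) (f : ℝ → ℝ) :
    cfc f (diagonal fun i => (d i : 𝕜)) = diagonal fun i => (f (d i) : 𝕜) := by
  have hd : (diagonal fun i => (d i : 𝕜)).IsHermitian :=
    isHermitian_diagonal_of_self_adjoint _ (by ext i; simp)
  obtain ⟨q, hq, hqd⟩ := exists_cfc_eq_aeval_and_eqOn hd f (Set.finite_range d)
  rw [hq, ← diagonalAlgHom_apply (R := ℝ), aeval_algHom_apply, aeval_pi_apply]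
  refine congrArg diagonal (funext fun i => ?_)
  rw [hqd (Set.mem_range_self i)]
  exact aeval_algebraMap_apply_eq_algebraMap_eval (d i) q

theorem cfc_unitary_mul_diagonal_mul_star {U : Matrix ι ι 𝕜} (hU : U ∈ unitaryGroup ι 𝕜)
    (d : ι → ℝ) (f : ℝ → ℝ) :
    cfc f (U * diagonal (fun i => (d i : 𝕜)) * star U)
      = U * diagonal (fun i => (f (d i) : 𝕜)) * star U := by
  have hD : (diagonal fun i => (d i : 𝕜)).IsHermitian :=
    isHermitian_diagonal_of_self_adjoint _ (by ext i; simp)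
  have hX := isHermitian_mul_mul_conjTranspose U hD
  rw [← star_eq_conjTranspose] at hX
  have hXU :
      U * diagonal (fun i => (d i : 𝕜)) * star U * U = U * diagonal fun i => (d i : 𝕜) := by
    rw [Matrix.mul_assoc, mem_unitaryGroup_iff'.mp hU, Matrix.mul_one]
  have key := cfc_mul_eq_mul_cfc_of_mul_eq_mul hX hD hXU f
  rw [cfc_diagonal] at key
  rw [← key, Matrix.mul_assoc _ U, mem_unitaryGroup_iff.mp hU, Matrix.mul_one]

theorem cfc_eq_eigenvectorUnitary_mul_diagonal_mul_star {X : Matrix ι ι 𝕜}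
    (hX : X.IsHermitian) (f : ℝ → ℝ) :
    cfc f X = (hX.eigenvectorUnitary : Matrix ι ι 𝕜)
      * diagonal (fun i => (f (hX.eigenvalues i) : 𝕜))
      * star (hX.eigenvectorUnitary : Matrix ι ι 𝕜) := by
  rw [hX.cfc_eq]
  rfl

end FunctionalCalculus

section Kronecker

variable {ι κ : Type*}

theorem IsHermitian.kronecker {R : Type*} [CommSemiring R] [StarRing R] {X : Matrix ι ι R}
    {Y : Matrix κ κ R} (hX : X.IsHermitian) (hY : Y.IsHermitian) : (X ⊗ₖ Y).IsHermitian := by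
  rw [IsHermitian, conjTranspose_kronecker, hX.eq, hY.eq]

variable [Fintype ι] [Fintype κ]

theorem commute_kronecker {R : Type*} [CommSemiring R] {X X' : Matrix ι ι R}
    {Y Y' : Matrix κ κ R} (hX : Commute X X') (hY : Commute Y Y') :
    Commute (X ⊗ₖ Y) (X' ⊗ₖ Y') := by
  rw [commute_iff_eq, ← mul_kronecker_mul, ← mul_kronecker_mul, hX.eq, hY.eq]

variable {𝕜 : Type*} [RCLike 𝕜] [DecidableEq ι] [DecidableEq κ]

theorem cfc_kronecker_cfc {X : Matrix ι ι 𝕜} {Y : Matrix κ κ 𝕜} (hX : X.IsHermitian)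
    (hY : Y.IsHermitian) (f g : ℝ → ℝ) :
    cfc f X ⊗ₖ cfc g Y
      = ((hX.eigenvectorUnitary : Matrix ι ι 𝕜) ⊗ₖ (hY.eigenvectorUnitary : Matrix κ κ 𝕜))
        * diagonal (fun p => ((f (hX.eigenvalues p.1) * g (hY.eigenvalues p.2) : ℝ) : 𝕜))
        * star ((hX.eigenvectorUnitary : Matrix ι ι 𝕜)
          ⊗ₖ (hY.eigenvectorUnitary : Matrix κ κ 𝕜)) := by
  rw [cfc_eq_eigenvectorUnitary_mul_diagonal_mul_star hX,
    cfc_eq_eigenvectorUnitary_mul_diagonal_mul_star hY, mul_kronecker_mul, mul_kronecker_mul,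
    diagonal_kronecker_diagonal]
  simp only [star_eq_conjTranspose, conjTranspose_kronecker, RCLike.ofReal_mul]

theorem cfc_log_kronecker {X : Matrix ι ι 𝕜} {Y : Matrix κ κ 𝕜} (hX : X.IsHermitian)
    (hY : Y.IsHermitian) :
    cfc Real.log (X ⊗ₖ Y)
      = cfc Real.log X ⊗ₖ cfc supportIndicator Y + cfc supportIndicator X ⊗ₖ cfc Real.log Y := by
  have hW : (hX.eigenvectorUnitary : Matrix ι ι 𝕜) ⊗ₖ (hY.eigenvectorUnitary : Matrix κ κ 𝕜)
      ∈ unitaryGroup (ι × κ) 𝕜 :=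
    kronecker_mem_unitary (SetLike.coe_mem _) (SetLike.coe_mem _)
  have hXY := cfc_kronecker_cfc hX hY id id
  rw [cfc_id ℝ X, cfc_id ℝ Y] at hXY
  rw [hXY, cfc_kronecker_cfc hX hY, cfc_kronecker_cfc hX hY, ← Matrix.add_mul,
    ← Matrix.mul_add, diagonal_add, cfc_unitary_mul_diagonal_mul_star hW]
  congr 3
  ext p
  simp only [id, log_mul_eq_log_mul_supportIndicator_add, RCLike.ofReal_add]

theorem commute_cfc_log_kronecker {X : Matrix ι ι 𝕜} {Y : Matrix κ κ 𝕜} (hX : X.IsHermitian)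
    (hY : Y.IsHermitian) : Commute (cfc Real.log (X ⊗ₖ Y)) (cfc Real.log X ⊗ₖ 1) := by
  rw [cfc_log_kronecker hX hY]
  exact (commute_kronecker (Commute.refl _) (Commute.one_right _)).add_left
    (commute_kronecker (cfc_commute_cfc _ _ _) (Commute.one_right _))

end Kronecker

end Matrix

section PureState

variable {ι κ : Type*} [Fintype ι] [Fintype κ]

theorem Matrix.isIdempotentElem_vecMulVec_star {R : Type*} [CommSemiring R] [StarRing R]
    {v : ι → R} (h : (vecMulVec v (star v)).trace = 1) :
    IsIdempotentElem (vecMulVec v (star v)) := by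
  rw [trace_vecMulVec, dotProduct_comm] at h
  rw [IsIdempotentElem, vecMulVec_mul_vecMulVec, h, one_smul]

theorem ptraceA_vecMulVec_vec (N : Matrix κ ι ℂ) :
    ptraceA (vecMulVec (vec N) (star (vec N))) = N * Nᴴ := by
  ext b b'
  simp [ptraceA, vecMulVec_apply, vec, mul_apply]

theorem ptraceB_vecMulVec_vec (N : Matrix κ ι ℂ) :
    ptraceB (vecMulVec (vec N) (star (vec N))) = (Nᴴ * N)ᵀ := by
  ext a a'
  simp [ptraceB, vecMulVec_apply, vec, mul_apply, mul_comm]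

theorem trace_mul_kronecker_one [DecidableEq κ] (ρ : Matrix (ι × κ) (ι × κ) ℂ)
    (X : Matrix ι ι ℂ) : (ρ * (X ⊗ₖ (1 : Matrix κ κ ℂ))).trace = (ptraceB ρ * X).trace := by
  simp only [trace, diag, mul_apply, ptraceB, of_apply, kroneckerMap_apply, one_apply,
    Fintype.sum_prod_type, Finset.sum_mul, mul_ite, mul_one, mul_zero]
  refine Finset.sum_congr rfl fun a _ => ?_
  rw [Finset.sum_comm]
  simp only [Finset.sum_ite_eq', Finset.mem_univ, if_true]

theorem Matrix.cfc_supportIndicator_mul_self {𝕜 : Type*} [RCLike 𝕜] [DecidableEq ι]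
    (M : Matrix ι κ 𝕜) :
    cfc supportIndicator (M * Mᴴ) * M = M := by
  have hMM : IsSelfAdjoint (M * Mᴴ) := (isHermitian_mul_conjTranspose_self M).isSelfAdjoint
  have h : cfc supportIndicator (M * Mᴴ) * (M * Mᴴ) = M * Mᴴ := by
    conv_lhs => rhs; rw [← cfc_id' ℝ (M * Mᴴ)]
    rw [← cfc_mul _ _ _ (continuousOn_spectrum _ _) (continuousOn_spectrum _ _)]
    exact (cfc_congr fun x _ => supportIndicator_mul_self x).trans (cfc_id' ℝ _)
  have h0 : (1 - cfc supportIndicator (M * Mᴴ)) * (M * Mᴴ) = 0 := by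
    rw [Matrix.sub_mul, Matrix.one_mul, h, sub_self]
  rw [mul_self_mul_conjTranspose_eq_zero, Matrix.sub_mul, Matrix.one_mul, sub_eq_zero] at h0
  exact h0.symm

theorem Matrix.cfc_log_kronecker_mulVec_vec {𝕜 : Type*} [RCLike 𝕜] [DecidableEq ι]
    [DecidableEq κ] (N : Matrix κ ι 𝕜) :
    cfc Real.log ((Nᴴ * N)ᵀ ⊗ₖ (N * Nᴴ)) *ᵥ vec N
      = (2 : ℝ) • ((cfc Real.log (Nᴴ * N)ᵀ ⊗ₖ (1 : Matrix κ κ 𝕜)) *ᵥ vec N) := by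
  have hNN := isHermitian_conjTranspose_mul_self N
  have hNN' := isHermitian_mul_conjTranspose_self N
  have hlog : cfc Real.log (N * Nᴴ) * N = N * cfc Real.log (Nᴴ * N) :=
    cfc_mul_eq_mul_cfc_of_mul_eq_mul hNN' hNN (Matrix.mul_assoc _ _ _) _
  have hlog_supp : cfc Real.log (Nᴴ * N) * cfc supportIndicator (Nᴴ * N)
      = cfc Real.log (Nᴴ * N) := by
    rw [← cfc_mul _ _ _ (continuousOn_spectrum _ _) (continuousOn_spectrum _ _)]
    exact cfc_congr fun x _ => log_mul_supportIndicator x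
  rw [cfc_log_kronecker hNN.transpose hNN', add_mulVec, kronecker_mulVec_vec,
    kronecker_mulVec_vec, kronecker_mulVec_vec, cfc_transpose hNN, cfc_transpose hNN,
    transpose_transpose, transpose_transpose, cfc_supportIndicator_mul_self, hlog,
    Matrix.mul_assoc, hlog_supp, Matrix.one_mul, two_smul]

end PureState

theorem mlog_eq_cfc {ι : Type*} [Fintype ι] [DecidableEq ι] {X : Matrix ι ι ℂ}
    (hX : X.IsHermitian) : mlog X = cfc Real.log X := by
  rw [mlog, dif_pos hX, hX.cfc_eq]

noncomputable def observableVariance {ι : Type*} [Fintype ι] [DecidableEq ι]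
    (ρ O : Matrix ι ι ℂ) : ℝ :=
  ((ρ * O ^ 2).trace).re - ((ρ * O).trace).re ^ 2

section ObservableVariance

variable {ι κ : Type*} [Fintype ι] [DecidableEq ι] [Fintype κ]

theorem relVar_eq_observableVariance (ρ σ : Matrix ι ι ℂ) :
    relVar ρ σ = observableVariance ρ (mlog ρ - mlog σ) := rfl

theorem varentropy_eq_observableVariance (ρ : Matrix ι ι ℂ) :
    varentropy ρ = observableVariance ρ (mlog ρ) := rfl

theorem observableVariance_neg (ρ O : Matrix ι ι ℂ) :
    observableVariance ρ (-O) = observableVariance ρ O := by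
  simp [observableVariance]

theorem observableVariance_kronecker_one [DecidableEq κ] (ρ : Matrix (ι × κ) (ι × κ) ℂ)
    (X : Matrix ι ι ℂ) :
    observableVariance ρ (X ⊗ₖ (1 : Matrix κ κ ℂ)) = observableVariance (ptraceB ρ) X := by
  rw [observableVariance, observableVariance, sq (X ⊗ₖ 1), ← mul_kronecker_mul, Matrix.one_mul,
    ← sq, trace_mul_kronecker_one, trace_mul_kronecker_one]

theorem observableVariance_eq_of_mul_eq_smul_mul {ρ O X : Matrix ι ι ℂ} {c : ℝ}
    (h : O * ρ = c • (X * ρ)) (hOX : Commute O X) :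
    observableVariance ρ O = c ^ 2 * observableVariance ρ X := by
  have h1 : (ρ * O).trace = c • (ρ * X).trace := by
    rw [trace_mul_comm, h, trace_smul, trace_mul_comm]
  have h2 : (ρ * O ^ 2).trace = c ^ 2 • (ρ * X ^ 2).trace := by
    rw [trace_mul_comm, sq, Matrix.mul_assoc, h, Matrix.mul_smul, ← Matrix.mul_assoc, hOX.eq,
      Matrix.mul_assoc, h, Matrix.mul_smul, smul_smul, trace_smul, ← Matrix.mul_assoc,
      trace_mul_comm, sq, sq]
  simp only [observableVariance, h1, h2, Complex.real_smul, Complex.re_ofReal_mul]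
  ring

end ObservableVariance

theorem stmt_6 {A B : Type*} [Fintype A] [DecidableEq A] [Fintype B] [DecidableEq B]
    (ρ : Matrix (A × B) (A × B) ℂ) (hρ : IsDensity ρ)
    (hpure : ∃ v : A × B → ℂ, ρ = Matrix.vecMulVec v (star v)) :
    relVar ρ (ptraceB ρ ⊗ₖ ptraceA ρ) = 4 * varentropy (ptraceB ρ) := by
  obtain ⟨v, hv⟩ := hpure
  obtain ⟨N, rfl⟩ := vec_bijective.surjective v
  have hA : (ptraceB ρ).IsHermitian := by
    rw [hv, ptraceB_vecMulVec_vec]; exact (isHermitian_conjTranspose_mul_self N).transpose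
  have hB : (ptraceA ρ).IsHermitian := by
    rw [hv, ptraceA_vecMulVec_vec]; exact isHermitian_mul_conjTranspose_self N
  have hlogρ : mlog ρ = 0 := by
    rw [mlog_eq_cfc hρ.1.1, cfc_log_eq_zero_of_isIdempotentElem]
    exact hv ▸ isIdempotentElem_vecMulVec_star (hv ▸ hρ.2)
  have hmul : cfc Real.log (ptraceB ρ ⊗ₖ ptraceA ρ) * ρ
      = (2 : ℝ) • ((cfc Real.log (ptraceB ρ) ⊗ₖ (1 : Matrix B B ℂ)) * ρ) := by
    rw [hv, ptraceB_vecMulVec_vec, ptraceA_vecMulVec_vec, mul_vecMulVec, mul_vecMulVec,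
      cfc_log_kronecker_mulVec_vec, smul_vecMulVec]
  rw [relVar_eq_observableVariance, hlogρ, mlog_eq_cfc (hA.kronecker hB), zero_sub,
    observableVariance_neg, observableVariance_eq_of_mul_eq_smul_mul hmul
      (commute_cfc_log_kronecker hA hB), observableVariance_kronecker_one,
    varentropy_eq_observableVariance, mlog_eq_cfc hA]
  norm_num
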